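/- arXiv:1711.08705 — 2 statements merged into one kernel-verified Lean document; each statement's English description precedes it below -/
import Mathlib

section
/- Let π be a probability density on (0,∞) satisfying Condition 1 with parameters b ≥ 0, R, u_0 > 0, C', b' > 0, K ≥ 0, u_* ≥ 1, 0 < p < n, and define D(x) = ∫_1^∞ e^{-x²/(2v)} v^{-1/2} π(v−1) dv. Then for all x with |x| ≥ 2(max(u_0, u_*) + 1): D(x) ≥ (1/(2R³C'))·e^{b + b' − |x|(1+b+b'/2)}·|x|^{1/2}·(p/n)^K. -/
/-! Restrict `D(x)` to the window `v ∈ [|x|/2, |x|]`, of length `|x|/2`. There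
`e^{-x²/(2v)} ≥ e^{-|x|}` and `v^{-1/2} ≥ |x|^{-1/2}`, while for `u = v - 1 ∈ [w, 4w]` with
`w = |x|/2 - 1 ≥ max(u₀, u_*)` two doubling steps of the regular variation give
`L(w) ≤ R² L(u)`, so the tail bound `C' π(w) ≥ (p/n)^K e^{-b'w}` propagates to
`R² C' π(u) ≥ (p/n)^K e^{-b'w - b(u - w)}`. The extra factor `R` and the exponent
`b + b' - |x|(1 + b + b'/2)` of the claimed bound are slack. -/

open MeasureTheory ProbabilityTheory Filter Set

noncomputable section

/-- Posterior shrinkage weight `m_x(π)`. -/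
def mx (π : ℝ → ℝ) (x : ℝ) : ℝ :=
  (∫ u in Ioi (0:ℝ), u * (1+u) ^ (-(3:ℝ)/2) * Real.exp (x^2/2 * (u/(1+u))) * π u) /
  (∫ u in Ioi (0:ℝ), (1+u) ^ (-(1:ℝ)/2) * Real.exp (x^2/2 * (u/(1+u))) * π u)

/-- `π` is a probability density on `(0,∞)`. -/
def IsDensity (π : ℝ → ℝ) : Prop :=
  Measurable π ∧ (∀ u, 0 ≤ π u) ∧ (∫ u in Ioi (0:ℝ), π u) = 1

/-- `L` is uniformly regularly varying at infinity with constants `R, u0`. -/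
def URV (L : ℝ → ℝ) (R u0 : ℝ) : Prop :=
  0 < R ∧ 0 < u0 ∧
    ∀ a ∈ Icc (1:ℝ) 2, ∀ u, u0 ≤ u → 1/R ≤ L (a*u) / L u ∧ L (a*u) / L u ≤ R

/-- Condition 1 with parameters `b R u0 C' b' K ustar` and `0 < p < n`:
`π(u) = L(u)e^{-bu}` with `L` uniformly regularly varying at infinity, and
`C'·π(u) ≥ (p/n)^K e^{-b'u}` for `u ≥ ustar`. -/
def Cond1 (π L : ℝ → ℝ) (b R u0 C' b' K ustar p n : ℝ) : Prop :=
  0 ≤ b ∧ 0 < C' ∧ 0 < b' ∧ 0 ≤ K ∧ 1 ≤ ustar ∧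
  (∀ u, π u = L u * Real.exp (-b*u)) ∧ URV L R u0 ∧
  (∀ u, ustar ≤ u → (p/n) ^ K * Real.exp (-b'*u) ≤ C' * π u)

/-- Condition 2: `∫_0^1 π ≥ c`. -/
def Cond2 (π : ℝ → ℝ) (c : ℝ) : Prop :=
  c ≤ ∫ u in Ioc (0:ℝ) 1, π u

/-- Condition 3(C), with `ν = √(log(n/p))` and `s = (p/n)ν²`. -/
def Cond3 (π : ℝ → ℝ) (C p n : ℝ) : Prop :=
  (∫ u in Ioi ((p/n) * Real.sqrt (Real.log (n/p)) ^ 2),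
      min u (Real.sqrt (Real.log (n/p)) ^ 3 / Real.sqrt u) * π u) +
    Real.sqrt (Real.log (n/p)) *
      (∫ u in Icc (1:ℝ) (Real.sqrt (Real.log (n/p)) ^ 2), π u / Real.sqrt u)
  ≤ C * ((p/n) * Real.sqrt (Real.log (n/p)) ^ 2)

/-- Standard normal cumulative distribution function `Φ`. -/
def Phi (x : ℝ) : ℝ := ((gaussianReal 0 1) (Iic x)).toReal

/-- The denominator integral `D(x) = ∫_1^∞ e^{-x²/(2v)} v^{-1/2} π(v-1) dv`. -/
def Dint (π : ℝ → ℝ) (x : ℝ) : ℝ :=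
  ∫ v in Ioi (1:ℝ), Real.exp (-x^2/(2*v)) * v ^ (-(1:ℝ)/2) * π (v-1)


namespace URV

variable {L : ℝ → ℝ} {R u0 : ℝ}

lemma ne_zero (hL : URV L R u0) {w : ℝ} (hw : u0 ≤ w) : L w ≠ 0 := by
  intro h0
  have h := (hL.2.2 1 ⟨le_rfl, one_le_two⟩ w hw).1
  rw [one_mul, h0, div_zero] at h
  exact (one_div_pos.2 hL.1).not_ge h

lemma one_le (hL : URV L R u0) : 1 ≤ R := by
  have h := (hL.2.2 1 ⟨le_rfl, one_le_two⟩ u0 le_rfl).2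
  rwa [one_mul, div_self (hL.ne_zero le_rfl)] at h

lemma le_mul_of_le_two_mul (hL : URV L R u0) (hL0 : ∀ u, 0 ≤ L u) {w u : ℝ}
    (hw : u0 ≤ w) (hwu : w ≤ u) (hu : u ≤ 2 * w) : L w ≤ R * L u := by
  have hw0 : 0 < w := hL.2.1.trans_le hw
  have hLw : 0 < L w := (hL0 w).lt_of_ne' (hL.ne_zero hw)
  have h := (hL.2.2 (u / w) ⟨(one_le_div hw0).2 hwu, (div_le_iff₀ hw0).2 hu⟩ w hw).1
  rw [div_mul_cancel₀ u hw0.ne', div_le_div_iff₀ hL.1 hLw] at h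
  linarith

lemma le_sq_mul_of_le_four_mul (hL : URV L R u0) (hL0 : ∀ u, 0 ≤ L u) {w u : ℝ}
    (hw : u0 ≤ w) (hwu : w ≤ u) (hu : u ≤ 4 * w) : L w ≤ R ^ 2 * L u := by
  have hR := hL.one_le
  have hw0 : 0 < w := hL.2.1.trans_le hw
  rcases le_or_gt u (2 * w) with hu2 | hu2
  · calc L w ≤ R * L u := hL.le_mul_of_le_two_mul hL0 hw hwu hu2
      _ ≤ R ^ 2 * L u := mul_le_mul_of_nonneg_right (by nlinarith) (hL0 u)
  · calc L w ≤ R * L (2 * w) := hL.le_mul_of_le_two_mul hL0 hw (by linarith) le_rfl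
      _ ≤ R * (R * L u) := by
          gcongr
          exact hL.le_mul_of_le_two_mul hL0 (by linarith) hu2.le (by linarith)
      _ = R ^ 2 * L u := by ring

end URV

namespace Cond1

variable {π L : ℝ → ℝ} {b R u0 C' b' K ustar p n : ℝ}

lemma L_nonneg (h1 : Cond1 π L b R u0 C' b' K ustar p n) (hπ0 : ∀ u, 0 ≤ π u) (u : ℝ) :
    0 ≤ L u :=
  nonneg_of_mul_nonneg_left (h1.2.2.2.2.2.1 u ▸ hπ0 u) (Real.exp_pos _)

lemma mul_exp_le (h1 : Cond1 π L b R u0 C' b' K ustar p n) (hπ0 : ∀ u, 0 ≤ π u) {w u : ℝ}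
    (hw0 : u0 ≤ w) (hws : ustar ≤ w) (hwu : w ≤ u) (hu : u ≤ 4 * w) :
    (p / n) ^ K * Real.exp (-b' * w - b * (u - w)) ≤ R ^ 2 * C' * π u := by
  have hLwu := h1.2.2.2.2.2.2.1.le_sq_mul_of_le_four_mul (h1.L_nonneg hπ0) hw0 hwu hu
  obtain ⟨-, hC', -, -, -, hπL, -, hlow⟩ := h1
  calc (p / n) ^ K * Real.exp (-b' * w - b * (u - w))
      = (p / n) ^ K * Real.exp (-b' * w) * Real.exp (-b * (u - w)) := by
        rw [mul_assoc, ← Real.exp_add]; ring_nf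
    _ ≤ C' * π w * Real.exp (-b * (u - w)) :=
        mul_le_mul_of_nonneg_right (hlow w hws) (Real.exp_pos _).le
    _ = C' * L w * Real.exp (-b * u) := by
        rw [hπL, mul_assoc, mul_assoc, ← Real.exp_add]; ring_nf
    _ ≤ C' * (R ^ 2 * L u) * Real.exp (-b * u) := by gcongr
    _ = R ^ 2 * C' * π u := by rw [hπL]; ring

end Cond1

def dintIntegrand (π : ℝ → ℝ) (x v : ℝ) : ℝ :=
  Real.exp (-x ^ 2 / (2 * v)) * v ^ (-(1:ℝ) / 2) * π (v - 1)

lemma Dint_eq_setIntegral (π : ℝ → ℝ) (x : ℝ) :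
    Dint π x = ∫ v in Ioi (1:ℝ), dintIntegrand π x v := rfl

lemma dintIntegrand_nonneg {π : ℝ → ℝ} (hπ0 : ∀ u, 0 ≤ π u) (x : ℝ) {v : ℝ} (hv : 0 ≤ v) :
    0 ≤ dintIntegrand π x v := by
  unfold dintIntegrand
  have := Real.rpow_nonneg hv (-(1:ℝ) / 2)
  have := hπ0 (v - 1)
  positivity

lemma dintIntegrand_le {π : ℝ → ℝ} (hπ0 : ∀ u, 0 ≤ π u) (x : ℝ) {v : ℝ} (hv : 1 ≤ v) :
    dintIntegrand π x v ≤ π (v - 1) := by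
  have hexp : Real.exp (-x ^ 2 / (2 * v)) ≤ 1 :=
    Real.exp_le_one_iff.2 (div_nonpos_of_nonpos_of_nonneg (by nlinarith) (by linarith))
  have hpow : v ^ (-(1:ℝ) / 2) ≤ 1 := Real.rpow_le_one_of_one_le_of_nonpos hv (by norm_num)
  exact mul_le_of_le_one_left (hπ0 _)
    (mul_le_one₀ hexp (Real.rpow_nonneg (by linarith) _) hpow)

lemma exp_neg_mul_rpow_mul_le_dintIntegrand {π : ℝ → ℝ} (hπ0 : ∀ u, 0 ≤ π u) {x v : ℝ}
    (hv : |x| / 2 ≤ v) (hvx : v ≤ |x|) (hx : 0 < |x|) :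
    Real.exp (-|x|) * |x| ^ (-(1:ℝ) / 2) * π (v - 1) ≤ dintIntegrand π x v := by
  have hv0 : 0 < v := by linarith
  have hexp : Real.exp (-|x|) ≤ Real.exp (-x ^ 2 / (2 * v)) := by
    rw [Real.exp_le_exp, neg_div, neg_le_neg_iff, div_le_iff₀ (by positivity), ← sq_abs]
    nlinarith
  have hpow : |x| ^ (-(1:ℝ) / 2) ≤ v ^ (-(1:ℝ) / 2) :=
    Real.rpow_le_rpow_of_nonpos hv0 hvx (by norm_num)
  unfold dintIntegrand
  gcongr
  exact hπ0 _

lemma IsDensity.integrableOn_comp_sub_one {π : ℝ → ℝ} (hπ : IsDensity π) :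
    IntegrableOn (fun v => π (v - 1)) (Ioi 1) := by
  have hint : IntegrableOn π (Ioi 0) := by
    by_contra h
    have hone := hπ.2.2
    rw [integral_undef h] at hone
    exact zero_ne_one hone
  have := ((measurePreserving_sub_right volume (1:ℝ)).integrableOn_comp_preimage
    (measurableEmbedding_subRight 1)).2 hint
  simpa [Function.comp_def] using this

lemma IsDensity.integrableOn_dintIntegrand {π : ℝ → ℝ} (hπ : IsDensity π) (x : ℝ) :
    IntegrableOn (dintIntegrand π x) (Ioi 1) := by
  refine hπ.integrableOn_comp_sub_one.mono' ?_ ?_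
  · have := hπ.1
    unfold dintIntegrand
    fun_prop
  · refine (ae_restrict_iff' measurableSet_Ioi).2 (Eventually.of_forall fun v hv => ?_)
    have hv1 : 1 ≤ v := le_of_lt hv
    rw [Real.norm_of_nonneg (dintIntegrand_nonneg hπ.2.1 x (by linarith))]
    exact dintIntegrand_le hπ.2.1 x hv1

lemma mul_sub_le_setIntegral_of_le_on_Icc {g : ℝ → ℝ} {s : Set ℝ} {a a' c : ℝ} (ha : a ≤ a')
    (hs : MeasurableSet s) (hsub : Icc a a' ⊆ s) (hg : IntegrableOn g s)
    (hg0 : ∀ v ∈ s, 0 ≤ g v) (hc : ∀ v ∈ Icc a a', c ≤ g v) :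
    c * (a' - a) ≤ ∫ v in s, g v := by
  calc c * (a' - a) = c * volume.real (Icc a a') := by rw [Real.volume_real_Icc_of_le ha]
    _ ≤ ∫ v in Icc a a', g v :=
        setIntegral_ge_of_const_le_real measurableSet_Icc measure_Icc_lt_top.ne hc
          (hg.mono_set hsub)
    _ ≤ ∫ v in s, g v :=
        setIntegral_mono_set hg ((ae_restrict_iff' hs).2 (Eventually.of_forall hg0))
          hsub.eventuallyLE

lemma Cond1.le_Dint {π L : ℝ → ℝ} {b R u0 C' b' K ustar p n : ℝ} (hπ : IsDensity π)
    (h1 : Cond1 π L b R u0 C' b' K ustar p n) (hP : 0 ≤ (p / n) ^ K) {x : ℝ}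
    (hx : 2 * (max u0 ustar + 1) ≤ |x|) :
    1 / (2 * R ^ 2 * C') * Real.exp (-|x| - b' * (|x| / 2 - 1) - b * (|x| / 2)) *
      |x| ^ ((1:ℝ) / 2) * (p / n) ^ K ≤ Dint π x := by
  have ⟨hb, hC', _, _, hustar, _, hL, _⟩ := h1
  set t := |x| with ht
  have hmax := le_max_left u0 ustar
  have hmax' := le_max_right u0 ustar
  have ht4 : 4 ≤ t := by linarith
  have ht0 : 0 < t := by linarith
  have hRC : 0 < R ^ 2 * C' := by have := hL.1; positivity
  set c := (p / n) ^ K * Real.exp (-b' * (t / 2 - 1) - b * (t / 2)) / (R ^ 2 * C') with hc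
  have hπc : ∀ v ∈ Icc (t / 2) t, c ≤ π (v - 1) := by
    rintro v ⟨hv, hvt⟩
    rw [div_le_iff₀' hRC]
    calc (p / n) ^ K * Real.exp (-b' * (t / 2 - 1) - b * (t / 2))
        ≤ (p / n) ^ K * Real.exp (-b' * (t / 2 - 1) - b * (v - 1 - (t / 2 - 1))) := by
          gcongr ?_ * Real.exp (_ - ?_)
          nlinarith
      _ ≤ R ^ 2 * C' * π (v - 1) :=
          h1.mul_exp_le hπ.2.1 (by linarith) (by linarith) (by linarith) (by linarith)
  have key := mul_sub_le_setIntegral_of_le_on_Icc (half_le_self ht0.le) measurableSet_Ioi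
    (fun v hv => show 1 < v by linarith [hv.1]) (hπ.integrableOn_dintIntegrand x)
    (fun v hv => dintIntegrand_nonneg hπ.2.1 x (by linarith [show 1 < v from hv]))
    (fun v hv => (mul_le_mul_of_nonneg_left (hπc v hv) (by positivity)).trans
      (exp_neg_mul_rpow_mul_le_dintIntegrand hπ.2.1 hv.1 hv.2 ht0))
  rw [← Dint_eq_setIntegral, ← ht] at key
  have hsqrt : t ^ ((1:ℝ) / 2) = t ^ (-(1:ℝ) / 2) * t := by
    rw [← Real.rpow_add_one ht0.ne']; norm_num
  convert key using 1
  rw [show -t - b' * (t / 2 - 1) - b * (t / 2) = -t + (-b' * (t / 2 - 1) - b * (t / 2)) by ring,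
    Real.exp_add, hsqrt, hc]
  field_simp
  ring

/-- lower bound for `D(x)` under Condition 1. -/
theorem stmt10 (π L : ℝ → ℝ) (b R u0 C' b' K ustar p n : ℝ)
    (hπ : IsDensity π) (hp : 0 < p) (hpn : p < n)
    (h1 : Cond1 π L b R u0 C' b' K ustar p n) :
    ∀ x : ℝ, 2 * (max u0 ustar + 1) ≤ |x| →
      (1 / (2 * R^3 * C')) * Real.exp (b + b' - |x| * (1 + b + b'/2)) *
          |x| ^ ((1:ℝ)/2) * (p/n) ^ K
        ≤ Dint π x := by
  intro x hx
  have ⟨hb, hC', _, _, hustar, _, hL, _⟩ := h1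
  have hP : 0 < (p / n) ^ K := Real.rpow_pos_of_pos (div_pos hp (hp.trans hpn)) K
  have hx2 : 2 ≤ |x| := by linarith [le_max_right u0 ustar]
  have hR := hL.one_le
  calc _ ≤ 1 / (2 * R ^ 2 * C') * Real.exp (-|x| - b' * (|x| / 2 - 1) - b * (|x| / 2)) *
          |x| ^ ((1:ℝ) / 2) * (p / n) ^ K := by
        gcongr ?_ * Real.exp ?_ * _ * _
        · gcongr
          norm_num
        · nlinarith
    _ ≤ Dint π x := h1.le_Dint hπ hP.le hx

end
end

section
/- Let π be a probability density on (0,∞), α ∈ (0,1), and T > 0 such that m_x(π) ≥ α whenever |x| ≥ T. Let θ ∈ ℝⁿ have support S_0 = {i : θ_i ≠ 0} with |S_0| = p ≥ 1, and let X_i ∼ N(θ_i, 1) be independent. Then the false nondiscovery proportion satisfies (1/p)·E[#{i ∈ S_0 : m_{X_i}(π) < α}] ≤ Φ(T − min_{i∈S_0}|θ_i|). -/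
open MeasureTheory ProbabilityTheory Filter Set

/-!
A signal `i ∈ S₀` can only be missed (`m_{Xᵢ}(π) < α`) when `|Xᵢ| < T`, so by linearity of
expectation the expected number of misses is at most `∑_{i ∈ S₀} P(|Xᵢ| < T)`. For
`Xᵢ ∼ N(θᵢ, 1)` this probability is, by the symmetry `y ↦ -y`, the same as for mean `|θᵢ|`,
hence at most `P(Xᵢ ≤ T) = Φ(T - |θᵢ|) ≤ Φ(T - min_{S₀} |θ|)`.
-/

open Finset

section CountingUnderProduct

variable {ι X : Type*}

lemma natCast_card_filter_mem_eq_sum_indicator (S : Finset ι) (A : Set X) [DecidablePred (· ∈ A)]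
    (x : ι → X) :
    (#{i ∈ S | x i ∈ A} : ℝ) = ∑ i ∈ S, (Function.eval i ⁻¹' A).indicator 1 x := by
  rw [natCast_card_filter]
  refine sum_congr rfl fun i _ => ?_
  by_cases h : x i ∈ A <;> simp [h]

variable [Fintype ι] [MeasurableSpace X] (μ : ι → Measure X) [∀ i, IsProbabilityMeasure (μ i)]
  (S : Finset ι) {A : Set X} [DecidablePred (· ∈ A)]

lemma integrable_card_filter_mem_pi (hA : MeasurableSet A) :
    Integrable (fun x : ι → X => (#{i ∈ S | x i ∈ A} : ℝ)) (Measure.pi μ) := by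
  simp_rw [natCast_card_filter_mem_eq_sum_indicator]
  exact integrable_finsetSum _ fun i _ =>
    (integrable_const 1).indicator (measurable_pi_apply i hA)

lemma integral_card_filter_mem_pi (hA : MeasurableSet A) :
    ∫ x, (#{i ∈ S | x i ∈ A} : ℝ) ∂Measure.pi μ = ∑ i ∈ S, (μ i).real A := by
  simp_rw [natCast_card_filter_mem_eq_sum_indicator]
  rw [integral_finsetSum _ fun i _ =>
    (integrable_const 1).indicator (measurable_pi_apply i hA)]
  refine sum_congr rfl fun i _ => ?_
  rw [integral_indicator_one (measurable_pi_apply i hA),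
    (measurePreserving_eval μ i).measureReal_preimage hA.nullMeasurableSet]

end CountingUnderProduct

lemma Phi_nonneg (x : ℝ) : 0 ≤ Phi x := ENNReal.toReal_nonneg

lemma Phi_monotone : Monotone Phi := fun _ _ hab =>
  measureReal_mono (μ := gaussianReal 0 1) (Iic_subset_Iic.2 hab)

lemma gaussianReal_real_Iic (m T : ℝ) : (gaussianReal m 1).real (Iic T) = Phi (T - m) := by
  have h := gaussianReal_map_add_const (μ := 0) (v := 1) m
  rw [zero_add] at h
  rw [← h, map_measureReal_apply (measurable_add_const m) measurableSet_Iic,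
    preimage_add_const_Iic, measureReal_def, Phi]

lemma measurableSet_abs_lt (T : ℝ) : MeasurableSet {y : ℝ | |y| < T} :=
  measurableSet_lt measurable_abs measurable_const

lemma gaussianReal_neg_real_abs_lt (m T : ℝ) :
    (gaussianReal (-m) 1).real {y | |y| < T} = (gaussianReal m 1).real {y | |y| < T} := by
  rw [← gaussianReal_map_neg, map_measureReal_apply measurable_neg (measurableSet_abs_lt T)]
  simp only [preimage_ofPred_eq, abs_neg]

lemma gaussianReal_real_abs_lt_le_Phi (m T : ℝ) :
    (gaussianReal m 1).real {y | |y| < T} ≤ Phi (T - |m|) := by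
  have hsymm : (gaussianReal m 1).real {y | |y| < T} = (gaussianReal |m| 1).real {y | |y| < T} := by
    rcases abs_choice m with h | h <;> rw [h]
    exact (gaussianReal_neg_real_abs_lt m T).symm
  rw [hsymm, ← gaussianReal_real_Iic]
  exact measureReal_mono fun y hy => (le_abs_self y).trans (le_of_lt hy)

theorem stmt15_general (π : ℝ → ℝ) (α : ℝ) (T : ℝ)
    (hthr : ∀ x : ℝ, T ≤ |x| → α ≤ mx π x)
    (n : ℕ) (θ : Fin n → ℝ) (p : ℕ)
    (hcard : (Finset.univ.filter (fun i => θ i ≠ 0)).card = p) :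
    (1 / (p : ℝ)) *
        (∫ x : Fin n → ℝ,
          ((Finset.univ.filter (fun i => θ i ≠ 0 ∧ mx π (x i) < α)).card : ℝ)
          ∂ Measure.pi (fun i => gaussianReal (θ i) 1))
      ≤ Phi (T - sInf ((fun i => |θ i|) '' {i : Fin n | θ i ≠ 0})) := by
  set m := sInf ((fun i => |θ i|) '' {i : Fin n | θ i ≠ 0})
  set S₀ := univ.filter (fun i => θ i ≠ 0)
  have hmin : ∀ i ∈ S₀, m ≤ |θ i| := fun i hi =>
    csInf_le (Set.toFinite _).bddBelow (mem_image_of_mem _ (mem_filter.1 hi).2)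
  have hmiss (x : Fin n → ℝ) :
      (#{i | θ i ≠ 0 ∧ mx π (x i) < α} : ℝ) ≤ #{i ∈ S₀ | x i ∈ {y | |y| < T}} := by
    rw [filter_filter]
    refine Nat.cast_le.2 (card_le_card (monotone_filter_right _ fun i _ hi => ?_))
    exact ⟨hi.1, lt_of_not_ge fun hTi => (hthr _ hTi).not_gt hi.2⟩
  have hA : MeasurableSet {y : ℝ | |y| < T} := measurableSet_abs_lt T
  have hexp : ∫ x, (#{i | θ i ≠ 0 ∧ mx π (x i) < α} : ℝ)
        ∂Measure.pi (fun i => gaussianReal (θ i) 1) ≤ p * Phi (T - m) :=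
    calc _ ≤ ∫ x, (#{i ∈ S₀ | x i ∈ {y | |y| < T}} : ℝ)
            ∂Measure.pi (fun i => gaussianReal (θ i) 1) :=
          integral_mono_of_nonneg (ae_of_all _ fun _ => Nat.cast_nonneg _)
            (integrable_card_filter_mem_pi (A := {y | |y| < T}) _ _ hA) (ae_of_all _ hmiss)
      _ = ∑ i ∈ S₀, (gaussianReal (θ i) 1).real {y | |y| < T} :=
          integral_card_filter_mem_pi (A := {y | |y| < T}) _ _ hA
      _ ≤ ∑ _i ∈ S₀, Phi (T - m) := sum_le_sum fun i hi =>
          (gaussianReal_real_abs_lt_le_Phi _ _).trans (Phi_monotone (by linarith [hmin i hi]))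
      _ = p * Phi (T - m) := by rw [sum_const, hcard, nsmul_eq_mul]
  calc _ ≤ 1 / (p : ℝ) * (p * Phi (T - m)) := by gcongr
    _ ≤ Phi (T - m) := by
      rw [← mul_assoc, one_div]
      exact mul_le_of_le_one_left (Phi_nonneg _) inv_mul_le_one

/-- false nondiscovery proportion bound:
`(1/p)·E[#{i ∈ S₀ : m_{Xᵢ}(π) < α}] ≤ Φ(T − min_{i∈S₀}|θᵢ|)`. -/
theorem stmt15 (π : ℝ → ℝ) (hπ : IsDensity π)
    (α : ℝ) (hα : α ∈ Ioo (0:ℝ) 1) (T : ℝ) (hT : 0 < T)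
    (hthr : ∀ x : ℝ, T ≤ |x| → α ≤ mx π x)
    (n : ℕ) (θ : Fin n → ℝ) (p : ℕ) (hp : 1 ≤ p)
    (hcard : (Finset.univ.filter (fun i => θ i ≠ 0)).card = p) :
    (1 / (p : ℝ)) *
        (∫ x : Fin n → ℝ,
          ((Finset.univ.filter (fun i => θ i ≠ 0 ∧ mx π (x i) < α)).card : ℝ)
          ∂ Measure.pi (fun i => gaussianReal (θ i) 1))
      ≤ Phi (T - sInf ((fun i => |θ i|) '' {i : Fin n | θ i ≠ 0})) :=
  stmt15_general π α T hthr n θ p hcard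
end
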